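/- Simplified uncertainty bound (Appendix A, eq. for w̃): Define w̃_η(x,u) = w_η(0, u − Kx) + η L_B max_i H_i x, where w_η(z,v) = η max_{i,l} H_i D(z,v) ẽ_l and L_B = max_{i,l} max_{x∈P} H_i D(x,Kx) ẽ_l. Then (a) w_η(x,u) ≤ w̃_η(x,u) for all (x,u), and (b) w̃_η satisfies the same Lipschitz inequality as w_η: w̃_η(x, v + K(x−z)) ≤ w̃_η(z, v) + η L_B max_i H_i(x − z) for all x, z, v. -/
import Mathlib


open Matrix

noncomputable section

/-- The `2^p` vertices of the unit hypercube `B_p = {θ | ‖θ‖_∞ ≤ 1/2}`. -/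
def vertexSet (p : ℕ) : Set (Fin p → ℝ) := {e | ∀ i, e i = 1 / 2 ∨ e i = -(1 / 2)}

/-- Affine parametrization `A(θ) = A₀ + Σ_i θ_i A_i`. -/
def Amat {n p : ℕ} (A0 : Matrix (Fin n) (Fin n) ℝ) (A : Fin p → Matrix (Fin n) (Fin n) ℝ)
    (θ : Fin p → ℝ) : Matrix (Fin n) (Fin n) ℝ := A0 + ∑ i, θ i • A i

/-- Affine parametrization `B(θ) = B₀ + Σ_i θ_i B_i`. -/
def Bmat {n m p : ℕ} (B0 : Matrix (Fin n) (Fin m) ℝ) (B : Fin p → Matrix (Fin n) (Fin m) ℝ)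
    (θ : Fin p → ℝ) : Matrix (Fin n) (Fin m) ℝ := B0 + ∑ i, θ i • B i

/-- `D(x,u) = [A₁x + B₁u, …, A_p x + B_p u]`. -/
def Dmat {n m p : ℕ} (A : Fin p → Matrix (Fin n) (Fin n) ℝ)
    (B : Fin p → Matrix (Fin n) (Fin m) ℝ) (x : Fin n → ℝ) (u : Fin m → ℝ) :
    Matrix (Fin n) (Fin p) ℝ := Matrix.of fun i j => (A j *ᵥ x + B j *ᵥ u) i

/-- Contraction rate `ρ_M = max_i max_{x ∈ P} H_i M x`. -/
def rho {n r : ℕ} (H : Fin r → (Fin n → ℝ)) (P : Set (Fin n → ℝ))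
    (M : Matrix (Fin n) (Fin n) ℝ) : ℝ :=
  sSup {y | ∃ i, ∃ x ∈ P, y = H i ⬝ᵥ (M *ᵥ x)}

/-- `L_B = max_{i,l} max_{x ∈ P} H_i D(x, Kx) ẽ_l`. -/
def LB {n m p r : ℕ} (H : Fin r → (Fin n → ℝ)) (P : Set (Fin n → ℝ))
    (A : Fin p → Matrix (Fin n) (Fin n) ℝ) (B : Fin p → Matrix (Fin n) (Fin m) ℝ)
    (K : Matrix (Fin m) (Fin n) ℝ) : ℝ :=
  sSup {y | ∃ i, ∃ e ∈ vertexSet p, ∃ x ∈ P, y = H i ⬝ᵥ (Dmat A B x (K *ᵥ x) *ᵥ e)}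

/-- `w_η(z,v) = η · max_{i,l} H_i D(z,v) ẽ_l`. -/
def wfun {n m p r : ℕ} (H : Fin r → (Fin n → ℝ))
    (A : Fin p → Matrix (Fin n) (Fin n) ℝ) (B : Fin p → Matrix (Fin n) (Fin m) ℝ)
    (η : ℝ) (z : Fin n → ℝ) (v : Fin m → ℝ) : ℝ :=
  η * sSup {y | ∃ i, ∃ e ∈ vertexSet p, y = H i ⬝ᵥ (Dmat A B z v *ᵥ e)}

/-- Simplified uncertainty bound `w̃_η(x,u) = w_η(0, u - Kx) + ηL_B max_i H_i x`. -/
def wtildefun {n m p r : ℕ} [NeZero r] (H : Fin r → (Fin n → ℝ)) (P : Set (Fin n → ℝ))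
    (A : Fin p → Matrix (Fin n) (Fin n) ℝ) (B : Fin p → Matrix (Fin n) (Fin m) ℝ)
    (K : Matrix (Fin m) (Fin n) ℝ) (η : ℝ) (x : Fin n → ℝ) (u : Fin m → ℝ) : ℝ :=
  wfun H A B η 0 (u - K *ᵥ x) +
    η * LB H P A B K * (Finset.univ.sup' Finset.univ_nonempty fun i => H i ⬝ᵥ x)


lemma vertexSet_finite (p : ℕ) : (vertexSet p).Finite := by
  have h : vertexSet p ⊆ Set.pi Set.univ (fun _ : Fin p => ({1/2, -(1/2)} : Set ℝ)) := by
    intro e he i _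
    rcases he i with h | h <;> simp [h]
  exact (Set.Finite.pi fun _ => Set.toFinite _).subset h

lemma vertexSet_nonempty (p : ℕ) : (vertexSet p).Nonempty :=
  ⟨fun _ => 1/2, fun _ => Or.inl rfl⟩

variable {n m p r : ℕ}

lemma Dmat_smul (A : Fin p → Matrix (Fin n) (Fin n) ℝ) (B : Fin p → Matrix (Fin n) (Fin m) ℝ)
    (c : ℝ) (x : Fin n → ℝ) (u : Fin m → ℝ) :
    Dmat A B (c • x) (c • u) = c • Dmat A B x u := by
  ext i j
  simp [Dmat, Matrix.mulVec_smul]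
  ring

lemma Dmat_decomp (A : Fin p → Matrix (Fin n) (Fin n) ℝ) (B : Fin p → Matrix (Fin n) (Fin m) ℝ)
    (K : Matrix (Fin m) (Fin n) ℝ) (x : Fin n → ℝ) (u : Fin m → ℝ) :
    Dmat A B x u = Dmat A B 0 (u - K *ᵥ x) + Dmat A B x (K *ᵥ x) := by
  ext i j
  simp [Dmat, Matrix.mulVec_sub]
  ring

lemma wS_finite (H : Fin r → (Fin n → ℝ)) (A : Fin p → Matrix (Fin n) (Fin n) ℝ)
    (B : Fin p → Matrix (Fin n) (Fin m) ℝ) (z : Fin n → ℝ) (v : Fin m → ℝ) :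
    {y | ∃ i, ∃ e ∈ vertexSet p, y = H i ⬝ᵥ (Dmat A B z v *ᵥ e)}.Finite := by
  have h : {y | ∃ i, ∃ e ∈ vertexSet p, y = H i ⬝ᵥ (Dmat A B z v *ᵥ e)} ⊆
      ⋃ i : Fin r, (fun e => H i ⬝ᵥ (Dmat A B z v *ᵥ e)) '' vertexSet p := by
    rintro y ⟨i, e, he, rfl⟩
    exact Set.mem_iUnion.2 ⟨i, ⟨e, he, rfl⟩⟩
  exact (Set.finite_iUnion fun i => (vertexSet_finite p).image _).subset h

lemma LBset_bddAbove (H : Fin r → (Fin n → ℝ)) {P : Set (Fin n → ℝ)}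
    (A : Fin p → Matrix (Fin n) (Fin n) ℝ) (B : Fin p → Matrix (Fin n) (Fin m) ℝ)
    (K : Matrix (Fin m) (Fin n) ℝ) (hPc : IsCompact P) :
    BddAbove {y | ∃ i, ∃ e ∈ vertexSet p, ∃ x ∈ P, y = H i ⬝ᵥ (Dmat A B x (K *ᵥ x) *ᵥ e)} := by
  have hsub : {y | ∃ i, ∃ e ∈ vertexSet p, ∃ x ∈ P, y = H i ⬝ᵥ (Dmat A B x (K *ᵥ x) *ᵥ e)} ⊆
      ⋃ i : Fin r, (fun q : (Fin p → ℝ) × (Fin n → ℝ) =>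
        H i ⬝ᵥ (Dmat A B q.2 (K *ᵥ q.2) *ᵥ q.1)) '' (vertexSet p ×ˢ P) := by
    rintro y ⟨i, e, he, x, hx, rfl⟩
    exact Set.mem_iUnion.2 ⟨i, ⟨(e, x), ⟨he, hx⟩, rfl⟩⟩
  have hb : ∀ i : Fin r, BddAbove ((fun q : (Fin p → ℝ) × (Fin n → ℝ) =>
      H i ⬝ᵥ (Dmat A B q.2 (K *ᵥ q.2) *ᵥ q.1)) '' (vertexSet p ×ˢ P)) := by
    intro i
    have hcomp : IsCompact (vertexSet p ×ˢ P) := (vertexSet_finite p).isCompact.prod hPc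
    have hcont : Continuous fun q : (Fin p → ℝ) × (Fin n → ℝ) =>
        H i ⬝ᵥ (Dmat A B q.2 (K *ᵥ q.2) *ᵥ q.1) := by
      simp only [dotProduct, Matrix.mulVec, Dmat, Matrix.of_apply, Pi.add_apply]
      fun_prop
    exact (hcomp.image hcont).bddAbove
  refine BddAbove.mono hsub ?_
  rw [← Set.biUnion_univ]
  exact (Set.finite_univ.bddAbove_biUnion).2 fun i _ => hb i


lemma LB_nonneg [NeZero r] (H : Fin r → (Fin n → ℝ)) {P : Set (Fin n → ℝ)}
    (A : Fin p → Matrix (Fin n) (Fin n) ℝ) (B : Fin p → Matrix (Fin n) (Fin m) ℝ)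
    (K : Matrix (Fin m) (Fin n) ℝ) (hP : P = {x | ∀ i, H i ⬝ᵥ x ≤ 1})
    (hPc : IsCompact P) : 0 ≤ LB H P A B K := by
  obtain ⟨e0, he0⟩ := vertexSet_nonempty p
  have h0P : (0 : Fin n → ℝ) ∈ P := by rw [hP]; intro j; simp
  have hmem : (0 : ℝ) ∈ {y | ∃ i, ∃ e ∈ vertexSet p, ∃ x ∈ P,
      y = H i ⬝ᵥ (Dmat A B x (K *ᵥ x) *ᵥ e)} := by
    refine ⟨0, e0, he0, 0, h0P, ?_⟩
    have hD : Dmat A B (0 : Fin n → ℝ) (0 : Fin m → ℝ) = 0 := by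
      ext i j; simp [Dmat]
    simp [hD]
  exact le_csSup (LBset_bddAbove H A B K hPc) hmem

lemma keyA [NeZero r] (H : Fin r → (Fin n → ℝ)) {P : Set (Fin n → ℝ)}
    (A : Fin p → Matrix (Fin n) (Fin n) ℝ) (B : Fin p → Matrix (Fin n) (Fin m) ℝ)
    (K : Matrix (Fin m) (Fin n) ℝ) (hP : P = {x | ∀ i, H i ⬝ᵥ x ≤ 1})
    (hPc : IsCompact P) (x : Fin n → ℝ) (i : Fin r) {e : Fin p → ℝ} (he : e ∈ vertexSet p) :
    H i ⬝ᵥ (Dmat A B x (K *ᵥ x) *ᵥ e) ≤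
      LB H P A B K * (Finset.univ.sup' Finset.univ_nonempty fun j => H j ⬝ᵥ x) := by
  set c : ℝ := Finset.univ.sup' Finset.univ_nonempty fun j => H j ⬝ᵥ x with hc
  have hbdd := LBset_bddAbove H A B K hPc
  have hLB0 := LB_nonneg H A B K hP hPc
  have hjc : ∀ j, H j ⬝ᵥ x ≤ c := fun j => Finset.le_sup' (fun j => H j ⬝ᵥ x) (Finset.mem_univ j)
  rcases lt_or_ge 0 c with hcpos | hcle
  · have hxP : c⁻¹ • x ∈ P := by
      rw [hP]; intro j
      have : H j ⬝ᵥ (c⁻¹ • x) = c⁻¹ * (H j ⬝ᵥ x) := dotProduct_smul c⁻¹ (H j) x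
      rw [this]
      calc c⁻¹ * (H j ⬝ᵥ x) ≤ c⁻¹ * c :=
            mul_le_mul_of_nonneg_left (hjc j) (inv_nonneg.2 hcpos.le)
        _ = 1 := inv_mul_cancel₀ hcpos.ne'
    have hle : H i ⬝ᵥ (Dmat A B (c⁻¹ • x) (K *ᵥ (c⁻¹ • x)) *ᵥ e) ≤ LB H P A B K :=
      le_csSup hbdd ⟨i, e, he, _, hxP, rfl⟩
    have heq : H i ⬝ᵥ (Dmat A B x (K *ᵥ x) *ᵥ e)
        = c * (H i ⬝ᵥ (Dmat A B (c⁻¹ • x) (K *ᵥ (c⁻¹ • x)) *ᵥ e)) := by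
      have hx : x = c • (c⁻¹ • x) := by
        rw [smul_smul, mul_inv_cancel₀ hcpos.ne', one_smul]
      conv_lhs => rw [hx]
      rw [Matrix.mulVec_smul, Dmat_smul, Matrix.smul_mulVec, dotProduct_smul,
        smul_eq_mul]
    rw [heq, mul_comm]
    exact mul_le_mul_of_nonneg_right hle hcpos.le
  · have hx0 : x = 0 := by
      by_contra hne
      obtain ⟨R, hR⟩ := isBounded_iff_forall_norm_le.1 hPc.isBounded
      have hnorm : 0 < ‖x‖ := norm_pos_iff.2 hne
      set t : ℝ := (|R| + 1) / ‖x‖ with ht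
      have ht0 : 0 ≤ t := by positivity
      have htP : t • x ∈ P := by
        rw [hP]; intro j
        have h1 : H j ⬝ᵥ (t • x) = t * (H j ⬝ᵥ x) := dotProduct_smul t (H j) x
        have h2 : H j ⬝ᵥ x ≤ 0 := le_trans (hjc j) hcle
        nlinarith
      have h3 := hR _ htP
      rw [norm_smul, Real.norm_of_nonneg ht0, ht, div_mul_cancel₀ _ hnorm.ne'] at h3
      have := le_abs_self R
      linarith
    subst hx0
    have hc0 : c = 0 := by
      rw [hc]
      simp
    have hD : Dmat A B (0 : Fin n → ℝ) (0 : Fin m → ℝ) = 0 := by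
      ext i j; simp [Dmat]
    rw [hc0]
    simp [hD]

/-- Appendix A: (a) `w_η(x,u) ≤ w̃_η(x,u)` and (b) `w̃_η` satisfies the
same Lipschitz inequality as `w_η`:
`w̃_η(x, v + K(x-z)) ≤ w̃_η(z,v) + ηL_B max_i H_i(x-z)`. -/
theorem simplified_uncertainty_bound {n m p r : ℕ} [NeZero r]
    (A : Fin p → Matrix (Fin n) (Fin n) ℝ) (B : Fin p → Matrix (Fin n) (Fin m) ℝ)
    (K : Matrix (Fin m) (Fin n) ℝ) (H : Fin r → (Fin n → ℝ))
    (P : Set (Fin n → ℝ)) (hP : P = {x | ∀ i, H i ⬝ᵥ x ≤ 1})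
    (hPc : IsCompact P) (h0 : (0 : Fin n → ℝ) ∈ interior P)
    (η : ℝ) (hη : 0 ≤ η) :
    (∀ (x : Fin n → ℝ) (u : Fin m → ℝ),
      wfun H A B η x u ≤ wtildefun H P A B K η x u) ∧
    (∀ (x z : Fin n → ℝ) (v : Fin m → ℝ),
      wtildefun H P A B K η x (v + K *ᵥ (x - z)) ≤
        wtildefun H P A B K η z v +
          η * LB H P A B K *
            (Finset.univ.sup' Finset.univ_nonempty fun i => H i ⬝ᵥ (x - z))) := by
  constructor
  · intro x u
    obtain ⟨e0, he0⟩ := vertexSet_nonempty p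
    have hbS : ∀ (z : Fin n → ℝ) (v : Fin m → ℝ),
        BddAbove {y | ∃ i, ∃ e ∈ vertexSet p, y = H i ⬝ᵥ (Dmat A B z v *ᵥ e)} :=
      fun z v => (wS_finite H A B z v).bddAbove
    have hne : ({y | ∃ i, ∃ e ∈ vertexSet p, y = H i ⬝ᵥ (Dmat A B x u *ᵥ e)} : Set ℝ).Nonempty :=
      ⟨_, 0, e0, he0, rfl⟩
    have h1 : sSup {y | ∃ i, ∃ e ∈ vertexSet p, y = H i ⬝ᵥ (Dmat A B x u *ᵥ e)} ≤
        sSup {y | ∃ i, ∃ e ∈ vertexSet p, y = H i ⬝ᵥ (Dmat A B 0 (u - K *ᵥ x) *ᵥ e)} +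
          LB H P A B K * (Finset.univ.sup' Finset.univ_nonempty fun j => H j ⬝ᵥ x) := by
      refine csSup_le hne ?_
      rintro y ⟨i, e, he, rfl⟩
      have hdec : Dmat A B x u *ᵥ e =
          Dmat A B 0 (u - K *ᵥ x) *ᵥ e + Dmat A B x (K *ᵥ x) *ᵥ e := by
        rw [Dmat_decomp A B K x u, Matrix.add_mulVec]
      rw [hdec, dotProduct_add]
      exact add_le_add (le_csSup (hbS _ _) ⟨i, e, he, rfl⟩) (keyA H A B K hP hPc x i he)
    unfold wtildefun wfun
    calc η * sSup {y | ∃ i, ∃ e ∈ vertexSet p, y = H i ⬝ᵥ (Dmat A B x u *ᵥ e)}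
        ≤ η * (sSup {y | ∃ i, ∃ e ∈ vertexSet p, y = H i ⬝ᵥ (Dmat A B 0 (u - K *ᵥ x) *ᵥ e)} +
            LB H P A B K * (Finset.univ.sup' Finset.univ_nonempty fun j => H j ⬝ᵥ x)) :=
          mul_le_mul_of_nonneg_left h1 hη
      _ = _ := by ring
  · intro x z v
    have harg : v + K *ᵥ (x - z) - K *ᵥ x = v - K *ᵥ z := by
      rw [Matrix.mulVec_sub]; abel
    unfold wtildefun
    rw [harg]
    have hLB0 := LB_nonneg H A B K hP hPc
    have hsum : (Finset.univ.sup' Finset.univ_nonempty fun i => H i ⬝ᵥ x) ≤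
        (Finset.univ.sup' Finset.univ_nonempty fun i => H i ⬝ᵥ z) +
          (Finset.univ.sup' Finset.univ_nonempty fun i => H i ⬝ᵥ (x - z)) := by
      refine Finset.sup'_le _ _ fun i _ => ?_
      have hsplit : H i ⬝ᵥ x = H i ⬝ᵥ z + H i ⬝ᵥ (x - z) := by
        rw [dotProduct_sub]; ring
      rw [hsplit]
      exact add_le_add (Finset.le_sup' (fun i => H i ⬝ᵥ z) (Finset.mem_univ i))
        (Finset.le_sup' (fun i => H i ⬝ᵥ (x - z)) (Finset.mem_univ i))
    have hc : 0 ≤ η * LB H P A B K := mul_nonneg hη hLB0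
    have hmul := mul_le_mul_of_nonneg_left hsum hc
    rw [mul_add] at hmul
    linarith
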